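/- Let m ∈ (1/2)ℤ_{>0}, s ∈ ℤ, and n, j ∈ ℤ. For every τ with Im τ > 0 and every z₂ ∈ ℂ, the function w ↦ Φ^{±[m;s]}(τ, w, z₂) has a simple pole at w = n + jτ, with residue lim_{w → n + jτ} (w − n − jτ) · Φ^{±[m;s]}(τ, w, z₂) = −(±1)^j (1/(2πi)) e^{−2πi j m z₂} e^{2πi j n m}. -/

import Mathlib

noncomputable section

open Complex

/-- `mexp w = e^{2πi w}`. -/
def mexp (w : ℂ) : ℂ := Complex.exp (2 * (Real.pi : ℂ) * Complex.I * w)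

/-- The signed mock theta function `Φ^{sgn[m;s]}(τ,z₁,z₂)`. -/
def PhiS (sgn : ℂ) (m s : ℝ) (τ z₁ z₂ : ℂ) : ℂ :=
  ∑' n : ℤ, sgn ^ n *
    mexp ((m : ℂ) * n * (z₁ + z₂) + (s : ℂ) * z₁ + τ * ((m : ℂ) * n ^ 2 + (s : ℂ) * n)) /
    (1 - mexp (z₁ + n * τ))

/-- The signed theta function `Θ^{sgn}_{j,m}(τ,z)`. -/
def ThetaS (sgn : ℂ) (j m : ℝ) (τ z : ℂ) : ℂ :=
  ∑' n : ℤ, sgn ^ n *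
    mexp ((m : ℂ) * z * ((n : ℂ) + ((j / (2 * m) : ℝ) : ℂ)) +
      τ * (m : ℂ) * ((n : ℂ) + ((j / (2 * m) : ℝ) : ℂ)) ^ 2)

/-- `E(x) = 2∫₀ˣ e^{-πu²} du`. -/
def Efun (x : ℝ) : ℝ := 2 * ∫ u in (0:ℝ)..x, Real.exp (-Real.pi * u ^ 2)

/-- `ψ_{m,n}(τ,z) = (n - 2m Im z / Im τ) √(Im τ / m)`. -/
def psiMN (m n : ℝ) (τ z : ℂ) : ℝ := (n - 2 * m * z.im / τ.im) * Real.sqrt (τ.im / m)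

/-- The real-analytic correction `R^{sgn}_{j,m}(τ,z)`; the summation variable `n ∈ j + 2mℤ`
is written as `n = j + 2mk`, `k ∈ ℤ`, so that `(±1)^{(n-j)/(2m)} = sgn^k`. -/
def RS (sgn : ℂ) (j m : ℝ) (τ z : ℂ) : ℂ :=
  ∑' k : ℤ, sgn ^ k *
    (((Real.sign (j + 2 * m * k - 1 / 2 - j + 2 * m) -
        Efun (psiMN m (j + 2 * m * k) τ z) : ℝ)) : ℂ) *
    Complex.exp (-(Real.pi : ℂ) * Complex.I * (((j + 2 * m * k : ℝ)) : ℂ) ^ 2 * τ / (2 * (m : ℂ))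
      + 2 * (Real.pi : ℂ) * Complex.I * (((j + 2 * m * k : ℝ)) : ℂ) * z)

/-- The modifier `Φ^{sgn[m;s]}_add`; the summation variable `j ∈ s + ℤ`, `s ≤ j < s + 2m`
is written as `j = s + i`, `0 ≤ i < ⌈2m⌉`. -/
def PhiAddS (sgn : ℂ) (m s : ℝ) (τ z₁ z₂ : ℂ) : ℂ :=
  ∑ i ∈ Finset.range ⌈2 * m⌉₊,
    RS sgn (s + i) m τ ((z₁ - z₂) / 2) * ThetaS sgn (s + i) m τ (z₁ + z₂)

/-- The modified (signed) mock theta function `Φ̃^{sgn[m;s]}`. -/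
def PhiTilde (sgn : ℂ) (m s : ℝ) (τ z₁ z₂ : ℂ) : ℂ :=
  PhiS sgn m s τ z₁ z₂ - (1 / 2) * PhiAddS sgn m s τ z₁ z₂

end

/-!
Near `p = n + jτ` only the summand `k = -j` of `Φ` is singular: its denominator
`1 - e^{2πi(w - jτ)}` has a simple zero at `p` with derivative `-2πi`. On the strip
`|Im w - j Im τ| ≤ Im τ / 2` every other denominator stays uniformly away from `0`, and the
numerators are Jacobi theta summands with Gaussian decay in `k`, so the remaining series converges
uniformly to a continuous function and does not contribute to the residue.
-/

open Complex Filter Topology Function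
open scoped Real

lemma mexp_add (a b : ℂ) : mexp (a + b) = mexp a * mexp b := by
  simp only [mexp, mul_add, Complex.exp_add]

lemma mexp_intCast (k : ℤ) : mexp k = 1 := by
  rw [mexp, ← Complex.exp_int_mul_two_pi_mul_I k]
  ring_nf

lemma norm_mexp (w : ℂ) : ‖mexp w‖ = rexp (-(2 * π * w.im)) := by
  simp [mexp, Complex.norm_exp, Complex.mul_re]

@[fun_prop]
lemma continuous_mexp : Continuous mexp := by
  unfold mexp
  fun_prop

lemma hasDerivAt_mexp (w : ℂ) : HasDerivAt mexp (2 * π * I * mexp w) w := by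
  have h := ((hasDerivAt_id' w).const_mul (2 * π * I : ℂ)).cexp
  exact h.congr_deriv (by rw [mul_one, mexp, mul_comm])

lemma mexp_eq_mexp_mul_jacobiTheta₂_term (m s τ z₂ w : ℂ) (k : ℤ) :
    mexp (m * k * (w + z₂) + s * w + τ * (m * k ^ 2 + s * k)) =
      mexp (s * w) * jacobiTheta₂_term k (m * (w + z₂) + s * τ) (2 * m * τ) := by
  rw [jacobiTheta₂_term, mexp, mexp, ← Complex.exp_add]
  ring_nf

lemma one_sub_rexp_le_norm_one_sub_mexp {r : ℝ} {x : ℂ} (hx : r ≤ |x.im|) :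
    1 - rexp (-(2 * π * r)) ≤ ‖1 - mexp x‖ := by
  rcases le_abs'.mp hx with hneg | hpos
  · have hlow : rexp (2 * π * r) ≤ ‖mexp x‖ := by
      rw [norm_mexp]
      gcongr
      nlinarith [Real.pi_pos]
    have hsum := add_le_add (Real.add_one_le_exp (2 * π * r)) (Real.add_one_le_exp (-(2 * π * r)))
    calc 1 - rexp (-(2 * π * r)) ≤ ‖mexp x‖ - ‖(1 : ℂ)‖ := by rw [norm_one]; linarith
      _ ≤ ‖1 - mexp x‖ := norm_sub_rev (1 : ℂ) (mexp x) ▸ norm_sub_norm_le _ _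
  · have hup : ‖mexp x‖ ≤ rexp (-(2 * π * r)) := by
      rw [norm_mexp]
      gcongr
    calc 1 - rexp (-(2 * π * r)) ≤ ‖(1 : ℂ)‖ - ‖mexp x‖ := by rw [norm_one]; linarith
      _ ≤ ‖1 - mexp x‖ := norm_sub_norm_le _ _

lemma one_sub_rexp_le_norm_one_sub_mexp_add_intCast_mul {τ w : ℂ} {j k : ℤ} (hτ : 0 < τ.im)
    (hk : k ≠ -j) (hw : |w.im - j * τ.im| ≤ τ.im / 2) :
    1 - rexp (-(π * τ.im)) ≤ ‖1 - mexp (w + k * τ)‖ := by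
  have hkj : (1 : ℝ) ≤ |((k + j : ℤ) : ℝ)| := by exact_mod_cast Int.one_le_abs (by omega)
  have him : (w + k * τ).im = (k + j : ℤ) * τ.im + (w.im - j * τ.im) := by
    simp only [add_im, mul_im, intCast_re, intCast_im, zero_mul, add_zero, Int.cast_add]
    ring
  have hgap : τ.im / 2 ≤ |(w + k * τ).im| := by
    rw [him]
    have := abs_sub_abs_le_abs_sub (((k + j : ℤ) : ℝ) * τ.im) (-(w.im - j * τ.im))
    rw [abs_neg, sub_neg_eq_add, abs_mul, abs_of_pos hτ] at this
    nlinarith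
  have h := one_sub_rexp_le_norm_one_sub_mexp hgap
  rwa [show 2 * π * (τ.im / 2) = π * τ.im by ring] at h

theorem tendsto_sub_mul_div_nhdsNE_of_hasDerivAt {N h : ℂ → ℂ} {p d : ℂ} (hN : ContinuousAt N p)
    (hp : h p = 0) (hd : HasDerivAt h d p) (hd0 : d ≠ 0) :
    Tendsto (fun w => (w - p) * (N w / h w)) (𝓝[≠] p) (𝓝 (N p / d)) := by
  have hslope := (hasDerivAt_iff_tendsto_slope.mp hd).inv₀ hd0
  refine ((hN.tendsto.mono_left nhdsWithin_le_nhds).mul hslope).congr fun w => ?_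
  rw [slope_def_field, hp, sub_zero]
  field_simp

theorem tendsto_sub_mul_nhdsNE_of_continuousAt {g : ℂ → ℂ} {p : ℂ} (hg : ContinuousAt g p) :
    Tendsto (fun w => (w - p) * g w) (𝓝[≠] p) (𝓝 0) := by
  have h : Tendsto (fun w => (w - p) * g w) (𝓝 p) (𝓝 ((p - p) * g p)) :=
    (tendsto_id.sub_const p).mul hg.tendsto
  rw [sub_self, zero_mul] at h
  exact h.mono_left nhdsWithin_le_nhds

theorem tendsto_sub_mul_tsum_nhdsNE_of_hasDerivAt {ι : Type*} [DecidableEq ι] {F : ι → ℂ → ℂ}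
    {U : Set ℂ} {u : ι → ℝ} {N h : ℂ → ℂ} {p d : ℂ} (i₀ : ι) (hU : U ∈ 𝓝 p) (hu : Summable u)
    (hFc : ∀ i ≠ i₀, ContinuousOn (F i) U) (hFu : ∀ i ≠ i₀, ∀ w ∈ U, ‖F i w‖ ≤ u i)
    (hF₀ : ∀ w, F i₀ w = N w / h w) (hN : ContinuousAt N p) (hp : h p = 0)
    (hd : HasDerivAt h d p) (hd0 : d ≠ 0) :
    Tendsto (fun w => (w - p) * ∑' i, F i w) (𝓝[≠] p) (𝓝 (N p / d)) := by
  set G : ι → ℂ → ℂ := fun i w => update (F · w) i₀ 0 i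
  have hGu : ∀ i, ∀ w ∈ U, ‖G i w‖ ≤ |u i| := by
    intro i w hw
    by_cases hi : i = i₀
    · simp [G, hi]
    · simpa [G, hi] using (hFu i hi w hw).trans (le_abs_self _)
  have hGc : ContinuousOn (fun w => ∑' i, G i w) U := by
    refine continuousOn_tsum (fun i => ?_) hu.abs hGu
    by_cases hi : i = i₀
    · simpa [G, hi] using continuousOn_const
    · simpa [G, hi] using hFc i hi
  have hsplit : ∀ w ∈ U, ∑' i, F i w = N w / h w + ∑' i, G i w := by
    intro w hw
    rw [(Summable.of_norm_bounded hu.abs (hGu · w hw)).tsum_eq_add_tsum_ite' i₀, hF₀]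
    simp [G, update_apply]
  have hsum := (tendsto_sub_mul_div_nhdsNE_of_hasDerivAt hN hp hd hd0).add
    (tendsto_sub_mul_nhdsNE_of_continuousAt (hGc.continuousAt hU))
  rw [add_zero] at hsum
  refine hsum.congr' ?_
  filter_upwards [nhdsWithin_le_nhds hU] with w hw
  rw [hsplit w hw, mul_add]

noncomputable def phiTerm (sgn : ℂ) (m s : ℝ) (τ z₂ : ℂ) (k : ℤ) (w : ℂ) : ℂ :=
  sgn ^ k * mexp ((m : ℂ) * k * (w + z₂) + (s : ℂ) * w + τ * ((m : ℂ) * k ^ 2 + (s : ℂ) * k)) /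
    (1 - mexp (w + k * τ))

lemma PhiS_eq_tsum_phiTerm (sgn : ℂ) (m s : ℝ) (τ w z₂ : ℂ) :
    PhiS sgn m s τ w z₂ = ∑' k, phiTerm sgn m s τ z₂ k w := rfl

lemma continuousOn_phiTerm (sgn : ℂ) (m s : ℝ) {τ : ℂ} (hτ : 0 < τ.im) (z₂ : ℂ) {j k : ℤ}
    (hk : k ≠ -j) : ContinuousOn (phiTerm sgn m s τ z₂ k) {w | |w.im - j * τ.im| ≤ τ.im / 2} := by
  refine ContinuousOn.div (by fun_prop) (by fun_prop) fun w hw h0 => ?_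
  have h := one_sub_rexp_le_norm_one_sub_mexp_add_intCast_mul hτ hk hw
  rw [h0, norm_zero, sub_nonpos, Real.one_le_exp_iff] at h
  nlinarith [Real.pi_pos]

lemma exists_summable_bound_phiTerm {sgn : ℂ} (hsgn : ‖sgn‖ = 1) {m : ℝ} (hm : 0 < m) (s : ℝ)
    {τ : ℂ} (hτ : 0 < τ.im) (z₂ : ℂ) (j : ℤ) :
    ∃ u : ℤ → ℝ, Summable u ∧ ∀ k ≠ -j, ∀ w ∈ {w : ℂ | |w.im - j * τ.im| ≤ τ.im / 2},
      ‖phiTerm sgn m s τ z₂ k w‖ ≤ u k := by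
  set R := |(j : ℝ)| * τ.im + τ.im / 2
  set S := m * (R + |z₂.im|) + |s| * τ.im
  set δ := 1 - rexp (-(π * τ.im))
  have hδ : 0 < δ := by
    rw [sub_pos, Real.exp_lt_one_iff, neg_lt_zero]
    positivity
  refine ⟨fun k => rexp (2 * π * |s| * R) / δ * rexp (-π * (2 * m * τ.im * k ^ 2 - 2 * S * |k|)),
    ?_, fun k hk w hw => ?_⟩
  · have hT : 0 < 2 * m * τ.im := by positivity
    simpa using
      (summable_pow_mul_jacobiTheta₂_term_bound S hT 0).mul_left (rexp (2 * π * |s| * R) / δ)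
  have hR : |w.im| ≤ R := by
    simp only [R]
    have := abs_add_le (w.im - j * τ.im) (j * τ.im)
    rw [sub_add_cancel, abs_mul, abs_of_pos hτ] at this
    linarith [hw.out]
  have hS : |(m * (w + z₂) + s * τ : ℂ).im| ≤ S := by
    simp only [add_im, mul_im, ofReal_re, ofReal_im, zero_mul, add_zero]
    calc |m * (w.im + z₂.im) + s * τ.im| ≤ m * (|w.im| + |z₂.im|) + |s| * τ.im := by
          refine (abs_add_le _ _).trans ?_
          rw [abs_mul, abs_mul, abs_of_pos hm, abs_of_pos hτ]
          gcongr
          exact abs_add_le _ _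
      _ ≤ m * (R + |z₂.im|) + |s| * τ.im := by gcongr
  have hθ := norm_jacobiTheta₂_term_le (by positivity : 0 < 2 * m * τ.im) hS
    (by simp : 2 * m * τ.im ≤ (2 * m * τ : ℂ).im) k
  have hsw : ‖mexp (s * w)‖ ≤ rexp (2 * π * |s| * R) := by
    rw [norm_mexp]
    gcongr
    simp only [mul_im, ofReal_re, ofReal_im, zero_mul, add_zero]
    have hsR : |s * w.im| ≤ |s| * R := by
      rw [abs_mul]
      gcongr
    nlinarith [Real.pi_pos, neg_abs_le (s * w.im)]
  have hden := one_sub_rexp_le_norm_one_sub_mexp_add_intCast_mul hτ hk hw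
  rw [phiTerm, mexp_eq_mexp_mul_jacobiTheta₂_term, norm_div, norm_mul, norm_mul, norm_zpow, hsgn,
    one_zpow, one_mul]
  calc ‖mexp (s * w)‖ * ‖jacobiTheta₂_term k (m * (w + z₂) + s * τ) (2 * m * τ)‖ /
        ‖1 - mexp (w + k * τ)‖
      ≤ rexp (2 * π * |s| * R) * rexp (-π * (2 * m * τ.im * k ^ 2 - 2 * S * |k|)) / δ := by
        gcongr
    _ = _ := by ring

theorem tendsto_sub_mul_PhiS_nhdsNE {sgn : ℂ} (hsgn : ‖sgn‖ = 1) {m : ℝ} (hm : 0 < m) (s : ℝ)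
    {τ : ℂ} (hτ : 0 < τ.im) (z₂ : ℂ) (n j : ℤ) :
    Tendsto (fun w => (w - (n + j * τ)) * PhiS sgn m s τ w z₂) (𝓝[≠] (n + j * τ))
      (𝓝 (-sgn ^ (-j) / (2 * π * I) * mexp (-(j * m * z₂) + (s - j * m) * n))) := by
  obtain ⟨u, hu, hbound⟩ := exists_summable_bound_phiTerm hsgn hm s hτ z₂ j
  set p : ℂ := n + j * τ
  have hU : {w : ℂ | |w.im - j * τ.im| ≤ τ.im / 2} ∈ 𝓝 p := by
    have h : Tendsto (fun w : ℂ => |w.im - j * τ.im|) (𝓝 p) (𝓝 0) := by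
      simpa [p] using ((continuous_im.sub continuous_const).abs.tendsto p :
        Tendsto (fun w : ℂ => |w.im - j * τ.im|) _ _)
    exact h.eventually_le_const (half_pos hτ)
  have hpole : mexp (p + (-j : ℤ) * τ) = 1 := by
    rw [show p + (-j : ℤ) * τ = n by push_cast [p]; ring, mexp_intCast]
  have hd : HasDerivAt (fun w => 1 - mexp (w + (-j : ℤ) * τ)) (-(2 * π * I)) p := by
    have h := ((hasDerivAt_mexp _).comp_add_const p ((-j : ℤ) * τ)).const_sub 1
    rwa [hpole, mul_one] at h
  have key := tendsto_sub_mul_tsum_nhdsNE_of_hasDerivAt (-j) hU hu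
    (fun k hk => continuousOn_phiTerm sgn m s hτ z₂ hk) hbound (fun w => rfl)
    (by fun_prop) (sub_eq_zero.2 hpole.symm) hd (by simp [Real.pi_ne_zero])
  simp only [← PhiS_eq_tsum_phiTerm] at key
  convert key using 2
  rw [show (m : ℂ) * (-j : ℤ) * (p + z₂) + s * p + τ * (m * (-j : ℤ) ^ 2 + s * (-j : ℤ)) =
    -(j * m * z₂) + (s - j * m) * n by push_cast [p]; ring]
  ring

/-- `Φ^{±[m;s]}(τ, ·, z₂)` has a simple pole at `w = n + jτ` with residue
`-(±1)^j (1/(2πi)) e^{-2πi j m z₂} e^{2πi j n m}`; here `m = m2/2 ∈ (1/2)ℤ_{>0}`,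
`s ∈ ℤ`, `n, j ∈ ℤ`, and the `±` sign is `sgn ∈ {1, -1}`. -/
theorem stmt10 (m2 : ℤ) (hm2 : 0 < m2) (s n j : ℤ)
    (sgn : ℂ) (hsgn : sgn = 1 ∨ sgn = -1)
    (τ : ℂ) (hτ : 0 < τ.im) (z₂ : ℂ) :
    Filter.Tendsto
      (fun w : ℂ => (w - ((n : ℂ) + (j : ℂ) * τ)) * PhiS sgn ((m2 : ℝ) / 2) (s : ℝ) τ w z₂)
      (nhdsWithin ((n : ℂ) + (j : ℂ) * τ) {((n : ℂ) + (j : ℂ) * τ)}ᶜ)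
      (nhds (-(sgn ^ j) * (1 / (2 * (Real.pi : ℂ) * Complex.I)) *
        mexp (-(j : ℂ) * ((m2 : ℂ) / 2) * z₂) * mexp ((j : ℂ) * (n : ℂ) * ((m2 : ℂ) / 2)))) := by
  have hsgn_inv : sgn⁻¹ = sgn := by rcases hsgn with rfl | rfl <;> norm_num
  have hsgn_norm : ‖sgn‖ = 1 := by rcases hsgn with rfl | rfl <;> simp
  have hm : (0 : ℝ) < m2 / 2 := by positivity
  convert tendsto_sub_mul_PhiS_nhdsNE hsgn_norm hm s hτ z₂ n j using 2
  have hexp :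
      -(j * (((m2 : ℝ) / 2 : ℝ) : ℂ) * z₂) + (((s : ℝ) : ℂ) - j * (((m2 : ℝ) / 2 : ℝ) : ℂ)) * n =
      -(j : ℂ) * (m2 / 2) * z₂ + (j * n * (m2 / 2) + ((s * n - m2 * j * n : ℤ) : ℂ)) := by
    push_cast
    ring
  rw [zpow_neg, ← inv_zpow, hsgn_inv, hexp, mexp_add, mexp_add, mexp_intCast]
  ring
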